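/- Let p be a prime with p ≡ 3 (mod 4) such that the regular continued fraction of √p has period length 6. Then p does not divide y, where x + y√p is the fundamental unit of ℚ(√p). -/
import Mathlib

set_option maxHeartbeats 1000000


/-- State `(m, d)` of the continued fraction algorithm for `√p` at step `i`,
representing the complete quotient `(√p + m) / d`; initial state `(0, 1)`. -/
def cfState (p : ℕ) : ℕ → ℕ × ℕ
  | 0 => (0, 1)
  | i + 1 =>
    let m := (cfState p i).1
    let d := (cfState p i).2
    let a := (Nat.sqrt p + m) / d
    (a * d - m, (p - (a * d - m) ^ 2) / d)

/-- The `i`-th partial quotient `aᵢ` of the regular continued fraction of `√p`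
(so `cfA p 0 = ⌊√p⌋`). -/
def cfA (p i : ℕ) : ℕ := (Nat.sqrt p + (cfState p i).1) / (cfState p i).2

/-- The period length `l` of the regular continued fraction of `√p`. -/
noncomputable def cfPeriod (p : ℕ) : ℕ := sInf {l | 0 < l ∧ cfState p (l + 1) = cfState p 1}

/-- `cfH p (i + 1)` is the denominator `hᵢ` of the `i`-th convergent of `√p`,
with the convention `cfH p 0 = h₋₁ = 0`, `cfH p 1 = h₀ = 1`,
`hᵢ₊₁ = aᵢ₊₁ hᵢ + hᵢ₋₁`. -/
def cfH (p : ℕ) : ℕ → ℕ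
  | 0 => 0
  | 1 => 1
  | i + 2 => cfA p (i + 1) * cfH p (i + 1) + cfH p i

/-- Invariants of the continued fraction states for `√p` (for indices `≥ 1`). -/
structure CFGood (p s m d : ℕ) : Prop where
  hm1 : 1 ≤ m
  hms : m ≤ s
  hd1 : 1 ≤ d
  hds : d ≤ s + m
  hsd : s < m + d
  hdvd : (d : ℤ) ∣ (p : ℤ) - (m : ℤ) ^ 2

lemma cfH_y_dvd_pow {d : ℤ} (u : Pell.Solution₁ d) {c : ℤ} (h : c ∣ u.y) (n : ℕ) :
    c ∣ (u ^ n).y := by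
  induction n with
  | zero => simp
  | succ k ih =>
    rw [pow_succ, Pell.Solution₁.y_mul]
    exact dvd_add (Dvd.dvd.mul_left h _) (ih.mul_right _)

lemma cfH_y_dvd_zpow {d : ℤ} (u : Pell.Solution₁ d) {c : ℤ} (h : c ∣ u.y) (n : ℤ) :
    c ∣ (u ^ n).y := by
  rcases n with k | k
  · rw [Int.ofNat_eq_coe, zpow_natCast]
    exact cfH_y_dvd_pow u h k
  · rw [zpow_negSucc, Pell.Solution₁.y_inv]
    exact (cfH_y_dvd_pow u h (k + 1)).neg_right


private lemma cfBoundD (p s d M D : ℤ) (hd : 1 ≤ d) (hM1 : 1 ≤ M) (hMs : M ≤ s)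
    (hD : 1 ≤ D) (hps : p < (s + 1) * (s + 1)) (hdd : d * D = p - M ^ 2)
    (hsdM : s < M + d) : D ≤ s + M := by
  rcases le_or_gt D (2 * M) with hc | hc
  · linarith
  · have k0 : p < (M + d) * (M + d) := by
      have h2 : s + 1 ≤ M + d := by linarith
      nlinarith [mul_le_mul h2 h2 (by linarith : (0:ℤ) ≤ s + 1) (by linarith : (0:ℤ) ≤ M + d)]
    have k1 : D < 2 * M + d := by
      by_contra hk
      push_neg at hk
      have h3 : (0:ℤ) ≤ d * (D - 2 * M - d) := mul_nonneg (by linarith) (by linarith)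
      nlinarith
    have k2 : (D - M) * (D - M) < p := by
      have h4 : (0:ℤ) < D * (2 * M + d - D) := mul_pos (by linarith) (by linarith)
      nlinarith
    by_contra hk
    push_neg at hk
    have h5 : (s + 1) * (s + 1) ≤ (D - M) * (D - M) :=
      mul_le_mul (by linarith) (by linarith) (by linarith) (by linarith)
    nlinarith

private lemma cfBoundS (p s m d M D : ℤ) (hd : 1 ≤ d) (hm : 1 ≤ m) (hms : m ≤ s)
    (hM1 : 1 ≤ M) (hMs : M ≤ s) (hD : 1 ≤ D) (hsp : s * s < p)
    (hdd : d * D = p - M ^ 2) (hdmM : d ≤ m + M) : s < M + D := by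
  have h9 : (0:ℤ) ≤ (s - (d - M)) * (s + (d - M)) :=
    mul_nonneg (by linarith) (by linarith)
  have j1 : (d - M) * (d - M) < p := by nlinarith
  have j2 : d < D + 2 * M := by
    by_contra hj
    push_neg at hj
    have h6 : (0:ℤ) ≤ d * (d - 2 * M - D) := mul_nonneg (by linarith) (by linarith)
    nlinarith
  have j3 : p < (M + D) * (M + D) := by
    have h7 : (0:ℤ) < D * (D + 2 * M - d) := mul_pos (by linarith) (by linarith)
    nlinarith
  by_contra hj
  push_neg at hj
  have h8 : (M + D) * (M + D) ≤ s * s :=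
    mul_le_mul hj hj (by linarith) (by linarith)
  linarith

/-- One step of the continued fraction algorithm preserves the invariants. -/
lemma cfStep (p s : ℕ) (hp : p.Prime) (hs : s = Nat.sqrt p)
    (hsp : s * s < p) (hps : p < (s + 1) * (s + 1)) (h2s : 2 * s < p)
    {i m d : ℕ} (hst : cfState p i = (m, d)) (g : CFGood p s m d) :
    ∃ M D : ℕ, cfState p (i + 1) = (M, D) ∧ CFGood p s M D ∧
      cfA p i * d = m + M ∧
      (d : ℤ) * (D : ℤ) = (p : ℤ) - (M : ℤ) ^ 2 ∧
      cfA p i = (s + M) / d := by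
  obtain ⟨hm1, hms, hd1, hds, hsd, hdvd⟩ := g
  have hd0 : 0 < d := hd1
  have hs1 : 1 ≤ s := le_trans hm1 hms
  set a := (s + m) / d with ha
  have haA : cfA p i = a := by rw [cfA, hst, ← hs]
  have hfl1 : a * d ≤ s + m := Nat.div_mul_le_self _ _
  have hfl2 : s + m < a * d + d := by
    conv_lhs => rw [← Nat.div_add_mod (s + m) d]
    rw [mul_comm d, ← ha]
    exact Nat.add_lt_add_left (Nat.mod_lt _ hd0) _
  have ha1 : 1 ≤ a := (Nat.one_le_div_iff hd0).2 hds
  have had : d ≤ a * d := Nat.le_mul_of_pos_left d ha1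
  set X := a * d with hX
  have hmX : m ≤ X := by rcases le_or_gt d s with hc | hc <;> omega
  set M := X - m with hM
  have hMs : M ≤ s := by omega
  have hXz : (M : ℤ) = (a : ℤ) * (d : ℤ) - (m : ℤ) := by
    have : (M : ℤ) = (X : ℤ) - (m : ℤ) := by
      rw [hM]; push_cast [Nat.cast_sub hmX]; ring
    rw [this, hX]; push_cast; ring
  have hdvdM : (d : ℤ) ∣ (p : ℤ) - (M : ℤ) ^ 2 := by
    have h2 : (p : ℤ) - (M : ℤ) ^ 2 =
        ((p : ℤ) - (m : ℤ) ^ 2) + (d : ℤ) * ((a : ℤ) * ((m : ℤ) - (M : ℤ))) := by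
      linear_combination ((m : ℤ) - (M : ℤ)) * hXz
    rw [h2]
    exact dvd_add hdvd (dvd_mul_right _ _)
  have hM1 : 1 ≤ M := by
    rcases Nat.eq_zero_or_pos M with h0 | h; swap
    · exact h
    exfalso
    have hdp : (d : ℤ) ∣ (p : ℤ) := by simpa [h0] using hdvdM
    have hdp' : d ∣ p := Int.natCast_dvd_natCast.mp hdp
    rcases hp.eq_one_or_self_of_dvd d hdp' with h1 | h1
    · have hXa : X = a := by rw [hX, h1, mul_one]
      have haa : a = s + m := by rw [ha, h1, Nat.div_one]
      omega
    · omega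
  have hM2p : M ^ 2 < p := by
    have : M * M ≤ s * s := Nat.mul_le_mul hMs hMs
    calc M ^ 2 = M * M := by ring
    _ ≤ s * s := this
    _ < p := hsp
  have hdvdN : d ∣ p - M ^ 2 := by
    have hcast : ((p - M ^ 2 : ℕ) : ℤ) = (p : ℤ) - (M : ℤ) ^ 2 := by
      push_cast [Nat.cast_sub hM2p.le]; ring
    exact Int.natCast_dvd_natCast.mp (by rw [hcast]; exact hdvdM)
  set D := (p - M ^ 2) / d with hD
  have hddN : d * D = p - M ^ 2 := Nat.mul_div_cancel' hdvdN
  have hdd : (d : ℤ) * (D : ℤ) = (p : ℤ) - (M : ℤ) ^ 2 := by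
    have := congrArg (fun n : ℕ => (n : ℤ)) hddN
    push_cast [Nat.cast_sub hM2p.le] at this
    exact this
  have hD1 : 1 ≤ D := by
    rcases Nat.eq_zero_or_pos D with h0 | h;
    · rw [h0, mul_zero] at hddN; omega
    · exact h
  -- integer versions for the inequality reasoning
  have zs : (1 : ℤ) ≤ (s : ℤ) := by exact_mod_cast hs1
  have zm : (1 : ℤ) ≤ (m : ℤ) := by exact_mod_cast hm1
  have zms : (m : ℤ) ≤ (s : ℤ) := by exact_mod_cast hms
  have zd : (1 : ℤ) ≤ (d : ℤ) := by exact_mod_cast hd1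
  have zM1 : (1 : ℤ) ≤ (M : ℤ) := by exact_mod_cast hM1
  have zMs : (M : ℤ) ≤ (s : ℤ) := by exact_mod_cast hMs
  have zD1 : (1 : ℤ) ≤ (D : ℤ) := by exact_mod_cast hD1
  have zps : (p : ℤ) < ((s : ℤ) + 1) * ((s : ℤ) + 1) := by exact_mod_cast hps
  have zsp : (s : ℤ) * (s : ℤ) < (p : ℤ) := by exact_mod_cast hsp
  have zsdM : (s : ℤ) < (M : ℤ) + (d : ℤ) := by
    have : s < M + d := by omega
    exact_mod_cast this
  have zdmM : (d : ℤ) ≤ (m : ℤ) + (M : ℤ) := by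
    have : d ≤ m + M := by omega
    exact_mod_cast this
  -- D ≤ s + M
  have hdsD : D ≤ s + M := by
    have h := cfBoundD (p:ℤ) (s:ℤ) (d:ℤ) (M:ℤ) (D:ℤ) zd zM1 zMs zD1 zps hdd zsdM
    have h2 : (D : ℤ) ≤ ((s + M : ℕ) : ℤ) := by push_cast; linarith
    exact_mod_cast h2
  -- s < M + D
  have hsdD : s < M + D := by
    have h := cfBoundS (p:ℤ) (s:ℤ) (m:ℤ) (d:ℤ) (M:ℤ) (D:ℤ) zd zm zms zM1 zMs zD1 zsp hdd zdmM
    have h2 : ((s : ℕ) : ℤ) < ((M + D : ℕ) : ℤ) := by push_cast; linarith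
    exact_mod_cast h2
  refine ⟨M, D, ?_, ⟨hM1, hMs, hD1, hdsD, hsdD, ?_⟩, ?_, hdd, ?_⟩
  · show cfState p (i + 1) = (M, D)
    have e : cfState p (i + 1) =
        ((Nat.sqrt p + m) / d * d - m, (p - ((Nat.sqrt p + m) / d * d - m) ^ 2) / d) := by
      simp only [cfState, hst]
    rw [e, ← hs, ← ha, ← hX, ← hM, ← hD]
  · rw [← hdd]; exact dvd_mul_left _ _
  · rw [haA]; omega
  · rw [haA]
    have l1 : a * d ≤ s + M := by omega
    have l2 : s + M < (a + 1) * d := by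
      have : s < m + d := hsd
      have : (a + 1) * d = a * d + d := by ring
      omega
    exact (Nat.div_eq_of_lt_le l1 l2).symm

lemma cfState_succ (p i m d : ℕ) (h : cfState p i = (m, d)) :
    cfState p (i + 1) =
      ((Nat.sqrt p + m) / d * d - m, (p - ((Nat.sqrt p + m) / d * d - m) ^ 2) / d) := by
  simp only [cfState, h]

private lemma cfQ2bound (p s a1 a2 m2 m3 d2 : ℤ) (h1 : a1 * (p - s^2) = s + m2)
    (h2 : a2 * d2 = m2 + m3) (h3 : (p - s^2) * d2 = p - m2^2)
    (ha1 : 1 ≤ a1) (ha2 : 1 ≤ a2) (hd2 : 1 ≤ d2) (hm2a : 1 ≤ m2) (hm2b : m2 ≤ s - 1)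
    (hm3a : 1 ≤ m3) (hm3b : m3 ≤ s) (hps : s * s + 2 ≤ p) (hs : 1 ≤ s) :
    a2 * a1 + 1 ≤ 2 * s := by
  have e1 : (s + m2) * (m2 + m3) = (a1 * a2) * (p - m2^2) := by
    linear_combination (-(m2 + m3)) * h1 - (a1 * (p - s^2)) * h2 + (a1 * a2) * h3
  by_contra hq
  push_neg at hq
  have ha12 : 2 * s ≤ a1 * a2 := by linarith
  have f0 : (0:ℤ) < p - m2^2 := by nlinarith
  have f2 : 2 * s * (p - m2^2) ≤ (a1 * a2) * (p - m2^2) :=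
    mul_le_mul_of_nonneg_right ha12 f0.le
  have f3 : (s + m2) * (m2 + m3) ≤ (s + m2) * (m2 + s) := by
    have : (0:ℤ) ≤ s + m2 := by linarith
    exact mul_le_mul_of_nonneg_left (by linarith) this
  have key : 2 * s * (p - m2^2) ≤ (s + m2) * (m2 + s) := by linarith
  nlinarith [mul_nonneg (by linarith : (0:ℤ) ≤ s - m2 - 1) (by linarith : (0:ℤ) ≤ m2 - 1),
    mul_nonneg (by linarith : (0:ℤ) ≤ s + m2) (by linarith : (0:ℤ) ≤ s - m2 - 1),
    mul_nonneg (mul_nonneg (by linarith : (0:ℤ) ≤ s) (by linarith : (0:ℤ) ≤ s - m2 - 1))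
      (by linarith : (0:ℤ) ≤ s + m2),
    mul_nonneg (by linarith : (0:ℤ) ≤ s - m2) (by linarith : (0:ℤ) ≤ s + m2)]

theorem stmt14 (p : ℕ) (hp : p.Prime) (h3 : p % 4 = 3) (hl : cfPeriod p = 6)
    (u : Pell.Solution₁ (p : ℤ)) (hu : Pell.IsFundamental u) :
    ¬ (p : ℤ) ∣ u.y := by
  intro hpy
  set s := Nat.sqrt p with hs
  have hp2 : 2 ≤ p := hp.two_le
  have hsp : s * s < p := by
    have h1 := Nat.sqrt_le' p
    rw [pow_two] at h1
    rcases lt_or_eq_of_le h1 with h | h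
    · exact h
    · exfalso
      rcases hp.eq_one_or_self_of_dvd _ ⟨_, h.symm⟩ with h2 | h2 <;>
        rw [h2] at h <;> nlinarith [hp.two_le]
  have hps : p < (s + 1) * (s + 1) := by
    have h1 := Nat.lt_succ_sqrt' p
    rw [pow_two] at h1
    simpa [Nat.succ_eq_add_one, hs] using h1
  have hodd : p % 2 = 1 := by omega
  have hs1 : 1 ≤ s := by
    rcases Nat.eq_zero_or_pos s with h0 | h
    · rw [h0] at hps; omega
    · exact h
  have h2s : 2 * s < p := by
    have h1 : 2 * s ≤ p := by nlinarith
    rcases lt_or_eq_of_le h1 with h | h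
    · exact h
    · omega
  have hp1 : s * s + 2 ≤ p := by
    rcases Nat.lt_or_ge (s * s + 1) p with h | h
    · omega
    · exfalso
      have hpe : p = s * s + 1 := by omega
      rcases Nat.even_or_odd s with ⟨k, hk⟩ | ⟨k, hk⟩
      · have : s * s = 4 * (k * k) := by rw [hk]; ring
        omega
      · have : s * s = 4 * (k * k + k) + 1 := by rw [hk]; ring
        omega
  -- periodicity facts
  have hSne : {l | 0 < l ∧ cfState p (l + 1) = cfState p 1}.Nonempty := by
    by_contra h
    rw [Set.not_nonempty_iff_eq_empty] at h
    rw [cfPeriod, h] at hl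
    simp [Nat.sInf_empty] at hl
  have hmem : 6 ∈ {l | 0 < l ∧ cfState p (l + 1) = cfState p 1} := by
    have h1 := Nat.sInf_mem hSne
    rw [cfPeriod] at hl
    rwa [hl] at h1
  obtain ⟨-, hper⟩ := hmem
  have hmin : ∀ l, 0 < l → cfState p (l + 1) = cfState p 1 → 6 ≤ l := by
    intro l h1 h2
    have h4 : sInf {l | 0 < l ∧ cfState p (l + 1) = cfState p 1} ≤ l := Nat.sInf_le ⟨h1, h2⟩
    rw [cfPeriod] at hl
    omega
  -- state 1
  have hst1 : cfState p 1 = (s, p - s ^ 2) := by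
    have h1 := cfState_succ p 0 0 1 rfl
    simpa [← hs] using h1
  have hsp2 : s ^ 2 < p := by rw [pow_two]; exact hsp
  have hd1cast : ((p - s ^ 2 : ℕ) : ℤ) = (p : ℤ) - (s : ℤ) ^ 2 := by
    push_cast [Nat.cast_sub hsp2.le]; ring
  have hss : s ^ 2 = s * s := by ring
  have hps' : p ≤ s * s + 2 * s := by nlinarith
  have g1 : CFGood p s s (p - s ^ 2) := by
    refine ⟨hs1, le_refl s, by omega, by omega, by omega, ?_⟩
    rw [hd1cast]
  obtain ⟨m2, d2, hst2, g2, hrec1, hdd1, hrev1⟩ := cfStep p s hp hs hsp hps h2s hst1 g1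
  obtain ⟨m3, d3, hst3, g3, hrec2, hdd2, hrev2⟩ := cfStep p s hp hs hsp hps h2s hst2 g2
  obtain ⟨m4, d4, hst4, g4, hrec3, hdd3, hrev3⟩ := cfStep p s hp hs hsp hps h2s hst3 g3
  obtain ⟨m5, d5, hst5, g5, hrec4, hdd4, hrev4⟩ := cfStep p s hp hs hsp hps h2s hst4 g4
  obtain ⟨m6, d6, hst6, g6, hrec5, hdd5, hrev5⟩ := cfStep p s hp hs hsp hps h2s hst5 g5
  obtain ⟨m7, d7, hst7, g7, hrec6, hdd6, hrev6⟩ := cfStep p s hp hs hsp hps h2s hst6 g6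
  -- m7 = s, d7 = p - s^2
  have hst71 : (m7, d7) = ((s : ℕ), p - s ^ 2) := by
    rw [← hst7, ← hst1]; exact hper
  have hm7 : m7 = s := congrArg Prod.fst hst71
  have hd7 : d7 = p - s ^ 2 := congrArg Prod.snd hst71
  have hD1ne : ((p : ℤ) - (s : ℤ) ^ 2) ≠ 0 := by
    have h1 : (s : ℤ) ^ 2 < (p : ℤ) := by exact_mod_cast hsp2
    have h2 : (0:ℤ) < (p : ℤ) - (s : ℤ) ^ 2 := by linarith
    exact ne_of_gt h2
  -- d6 = 1
  have hd6 : d6 = 1 := by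
    rw [hm7, hd7] at hdd6
    rw [hd1cast] at hdd6
    have h1 : ((d6 : ℤ) - 1) * ((p : ℤ) - (s : ℤ) ^ 2) = 0 := by linear_combination hdd6
    rcases mul_eq_zero.mp h1 with h2 | h2
    · have : (d6 : ℤ) = 1 := by linarith
      exact_mod_cast this
    · exact absurd h2 hD1ne
  -- m6 = s
  have hm6 : m6 = s := by
    have h1 := g6.hsd
    have h2 := g6.hms
    omega
  -- d5 = p - s^2
  have hd5 : d5 = p - s ^ 2 := by
    rw [hm6, hd6] at hdd5
    have h1 : (d5 : ℤ) = ((p - s ^ 2 : ℕ) : ℤ) := by rw [hd1cast]; push_cast at hdd5 ⊢; linarith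
    exact_mod_cast h1
  -- a5 = a1, m5 = m2
  have ha1v : cfA p 1 = (s + s) / (p - s ^ 2) := by rw [cfA, hst1, ← hs]
  have ha5 : cfA p 5 = cfA p 1 := by rw [hrev5, hm6, hd5, ha1v]
  have hm5 : m5 = m2 := by
    rw [ha5, hd5, hm6] at hrec5
    have h1 : s + m2 = m5 + s := hrec1.symm.trans hrec5
    omega
  -- d4 = d2
  have hd4 : d4 = d2 := by
    rw [hm5, hd5, hd1cast] at hdd4
    have h1 : ((d4 : ℤ) - (d2 : ℤ)) * ((p : ℤ) - (s : ℤ) ^ 2) = 0 := by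
      rw [hd1cast] at hdd1; linear_combination hdd4 - hdd1
    rcases mul_eq_zero.mp h1 with h2 | h2
    · have : (d4 : ℤ) = (d2 : ℤ) := by linarith
      exact_mod_cast this
    · exact absurd h2 hD1ne
  -- a4 = a2
  have ha2v : cfA p 2 = (s + m2) / d2 := by rw [cfA, hst2, ← hs]
  have ha4 : cfA p 4 = cfA p 2 := by rw [hrev4, hm5, hd4, ha2v]
  -- m4 = m3
  have hm4 : m4 = m3 := by
    rw [ha4, hd4, hm5] at hrec4
    have h1 : m2 + m3 = m4 + m2 := hrec2.symm.trans hrec4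
    omega
  -- the key relation a3 * d3 = 2 * m3
  have hR : cfA p 3 * d3 = 2 * m3 := by rw [hrec3, hm4]; ring
  -- m2 ≠ s
  have hm2ne : m2 ≠ s := by
    intro he
    have hd2e : d2 = 1 := by
      rw [he] at hdd1
      rw [hd1cast] at hdd1
      have h1 : ((d2 : ℤ) - 1) * ((p : ℤ) - (s : ℤ) ^ 2) = 0 := by linear_combination hdd1
      rcases mul_eq_zero.mp h1 with h2 | h2
      · have : (d2 : ℤ) = 1 := by linarith
        exact_mod_cast this
      · exact absurd h2 hD1ne
    have hst2' : cfState p 2 = (s, 1) := by rw [hst2, he, hd2e]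
    have h31 : cfState p (2 + 1) = cfState p 1 := by
      have e := cfState_succ p 2 s 1 hst2'
      rw [e, hst1, ← hs]
      have e1 : (s + s) / 1 * 1 - s = s := by omega
      rw [e1]
      simp
    exact absurd (hmin 2 (by norm_num) h31) (by norm_num)
  -- positivity of partial quotients
  have ha1pos : 1 ≤ cfA p 1 := by
    rcases Nat.eq_zero_or_pos (cfA p 1) with h0 | h
    · rw [h0, zero_mul] at hrec1; omega
    · exact h
  have ha2pos : 1 ≤ cfA p 2 := by
    rcases Nat.eq_zero_or_pos (cfA p 2) with h0 | h
    · rw [h0, zero_mul] at hrec2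
      have := g2.hm1; omega
    · exact h
  -- integer forms of the recurrence relations
  have hr1z : (cfA p 1 : ℤ) * ((p:ℤ) - (s:ℤ)^2) = (s:ℤ) + (m2:ℤ) := by
    have h := hrec1
    zify [hsp2.le] at h
    exact h
  have hr2z : (cfA p 2 : ℤ) * (d2:ℤ) = (m2:ℤ) + (m3:ℤ) := by exact_mod_cast hrec2
  have hdd1z : ((p:ℤ) - (s:ℤ)^2) * (d2:ℤ) = (p:ℤ) - (m2:ℤ)^2 := by
    rw [hd1cast] at hdd1
    exact hdd1
  have hRz : (cfA p 3 : ℤ) * (d3:ℤ) = 2 * (m3:ℤ) := by exact_mod_cast hR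
  have hd2ne : (d2:ℤ) ≠ 0 := by
    have h := g2.hd1
    have h2 : (0:ℤ) < (d2:ℤ) := by exact_mod_cast h
    exact ne_of_gt h2
  -- explicit formulas
  have hm2e : (m2:ℤ) = (cfA p 1 : ℤ) * ((p:ℤ) - (s:ℤ)^2) - (s:ℤ) := by linarith [hr1z]
  have hd2e : (d2:ℤ) = 1 + (cfA p 1 : ℤ) * ((s:ℤ) - (m2:ℤ)) := by
    refine mul_left_cancel₀ hD1ne ?_
    linear_combination hdd1z + ((m2:ℤ) - (s:ℤ)) * hr1z
  have hm3e : (m3:ℤ) = (cfA p 2 : ℤ) * (d2:ℤ) - (m2:ℤ) := by linarith [hr2z]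
  have hd3e : (d3:ℤ) = ((p:ℤ) - (s:ℤ)^2) + (cfA p 2 : ℤ) * ((m2:ℤ) - (m3:ℤ)) := by
    refine mul_left_cancel₀ hd2ne ?_
    linear_combination hdd2 - hdd1z - ((m2:ℤ) - (m3:ℤ)) * hr2z
  -- fully explicit key relation
  have hRfull := hRz
  rw [hd3e, hm3e, hd2e, hm2e] at hRfull
  -- convergent denominators
  have hH0 : cfH p 0 = 0 := rfl
  have hH1 : cfH p 1 = 1 := rfl
  have hH2 : cfH p 2 = cfA p 1 * cfH p 1 + cfH p 0 := rfl
  have hH3 : cfH p 3 = cfA p 2 * cfH p 2 + cfH p 1 := rfl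
  have hH4 : cfH p 4 = cfA p 3 * cfH p 3 + cfH p 2 := rfl
  have hH5 : cfH p 5 = cfA p 4 * cfH p 4 + cfH p 3 := rfl
  have hH6 : cfH p 6 = cfA p 5 * cfH p 5 + cfH p 4 := rfl
  have hq2n : cfH p 3 = cfA p 2 * cfA p 1 + 1 := by
    rw [hH3, hH2, hH1, hH0]
    ring
  have hq2z : (cfH p 3 : ℤ) = (cfA p 2 : ℤ) * (cfA p 1 : ℤ) + 1 := by exact_mod_cast hq2n
  have hq5n : cfH p 6 =
      cfA p 1 * (cfA p 2 * (cfA p 3 * (cfA p 2 * cfA p 1 + 1) + cfA p 1) +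
        (cfA p 2 * cfA p 1 + 1)) + (cfA p 3 * (cfA p 2 * cfA p 1 + 1) + cfA p 1) := by
    rw [hH6, ha5, hH5, ha4, hH4, hH3, hH2, hH1, hH0]
    ring
  have hq5z : (cfH p 6 : ℤ) =
      (cfA p 1 : ℤ) * ((cfA p 2 : ℤ) * ((cfA p 3 : ℤ) * ((cfA p 2 : ℤ) * (cfA p 1 : ℤ) + 1) +
        (cfA p 1 : ℤ)) + ((cfA p 2 : ℤ) * (cfA p 1 : ℤ) + 1)) +
        ((cfA p 3 : ℤ) * ((cfA p 2 : ℤ) * (cfA p 1 : ℤ) + 1) + (cfA p 1 : ℤ)) := by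
    exact_mod_cast hq5n
  -- the Pell solution coming from the full period
  have hv : ((cfA p 1 : ℤ) * ((cfA p 2 : ℤ) * ((cfA p 3 : ℤ) * ((cfA p 2 : ℤ) * ((cfA p 1 : ℤ) * (s:ℤ) + 1) + (s:ℤ)) + ((cfA p 1 : ℤ) * (s:ℤ) + 1)) + ((cfA p 2 : ℤ) * ((cfA p 1 : ℤ) * (s:ℤ) + 1) + (s:ℤ))) + ((cfA p 3 : ℤ) * ((cfA p 2 : ℤ) * ((cfA p 1 : ℤ) * (s:ℤ) + 1) + (s:ℤ)) + ((cfA p 1 : ℤ) * (s:ℤ) + 1))) ^ 2 - (p:ℤ) * ((cfH p 6 : ℤ)) ^ 2 = 1 := by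
    rw [hq5z]
    linear_combination (-( (cfA p 3 : ℤ) + 2*(cfA p 1 : ℤ) +
      2*(cfA p 1 : ℤ)*(cfA p 2 : ℤ)*(cfA p 3 : ℤ) + 2*(cfA p 1 : ℤ)^2*(cfA p 2 : ℤ) +
      (cfA p 1 : ℤ)^2*(cfA p 2 : ℤ)^2*(cfA p 3 : ℤ))) * hRfull
  set v : Pell.Solution₁ (p : ℤ) := Pell.Solution₁.mk _ _ hv with hvdef
  have hvy : v.y = (cfH p 6 : ℤ) := Pell.Solution₁.y_mk _ _ _
  have hpq5 : (p:ℤ) ∣ (cfH p 6 : ℤ) := by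
    obtain ⟨n, hn | hn⟩ := hu.eq_zpow_or_neg_zpow v
    · have h1 := cfH_y_dvd_zpow u hpy n
      rw [← hn, hvy] at h1
      exact h1
    · have h1 := cfH_y_dvd_zpow u hpy n
      have h2 : v.y = -(u ^ n).y := by rw [hn, Pell.Solution₁.y_neg]
      rw [hvy] at h2
      rw [h2]
      exact h1.neg_right
  -- the palindromic identity
  have hG : (d3:ℤ) * (cfH p 6 : ℤ) =
      2 * ((cfA p 2 : ℤ) * ((cfA p 1 : ℤ) * (s:ℤ) + 1) + (s:ℤ)) * (cfH p 3 : ℤ) := by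
    rw [hq5z, hq2z, hd3e, hm3e, hd2e, hm2e]
    linear_combination (((cfA p 2 : ℤ) * (cfA p 1 : ℤ) + 1)^2) * hRfull
  -- divisibility transfer
  have hdvd2 : (p:ℤ) ∣ 2 * ((cfA p 2 : ℤ) * ((cfA p 1 : ℤ) * (s:ℤ) + 1) + (s:ℤ)) * (cfH p 3 : ℤ) := by
    rw [← hG]
    exact hpq5.mul_left _
  have hpz : Prime ((p:ℕ) : ℤ) := Nat.prime_iff_prime_int.mp hp
  have hp3 : 3 ≤ p := by omega
  -- bounds
  have hd3le : d3 ≤ 2 * s := by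
    have h1 := g3.hds
    have h2 := g3.hms
    omega
  have hd3pos := g3.hd1
  have hq2le : cfH p 3 ≤ 2 * s := by
    have hb := cfQ2bound (p:ℤ) (s:ℤ) (cfA p 1 : ℤ) (cfA p 2 : ℤ) (m2:ℤ) (m3:ℤ) (d2:ℤ)
      hr1z hr2z hdd1z (by exact_mod_cast ha1pos) (by exact_mod_cast ha2pos)
      (by exact_mod_cast g2.hd1) (by exact_mod_cast g2.hm1)
      (by { have h1 := g2.hms; have h2 : m2 ≤ s - 1 := by omega;
            have : (m2:ℤ) ≤ (s:ℤ) - 1 := by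
              have h3 : m2 + 1 ≤ s := by omega
              have h4 : (m2:ℤ) + 1 ≤ (s:ℤ) := by exact_mod_cast h3
              linarith
            exact this })
      (by exact_mod_cast g3.hm1) (by exact_mod_cast g3.hms)
      (by exact_mod_cast hp1) (by exact_mod_cast hs1)
    have : ((cfH p 3 : ℕ) : ℤ) ≤ 2 * (s:ℤ) := by rw [hq2z]; exact hb
    exact_mod_cast this
  -- split the divisibility
  rcases (hpz.dvd_mul.mp hdvd2) with h1 | h1
  · rcases (hpz.dvd_mul.mp h1) with h2 | h2
    · -- p ∣ 2
      have := Int.le_of_dvd (by norm_num) h2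
      have : (3:ℤ) ≤ (p:ℤ) := by exact_mod_cast hp3
      omega
    · -- p ∣ n2
      have hB2 : ((cfA p 2 : ℤ) * ((cfA p 1 : ℤ) * (s:ℤ) + 1) + (s:ℤ))^2 -
          (p:ℤ) * (cfH p 3 : ℤ)^2 = -(d3:ℤ) := by
        rw [hq2z, hd3e, hm3e, hd2e, hm2e]
        ring
      have hpd3 : (p:ℤ) ∣ (d3:ℤ) := by
        have h4 : (d3:ℤ) = (p:ℤ) * (cfH p 3 : ℤ)^2 -
            ((cfA p 2 : ℤ) * ((cfA p 1 : ℤ) * (s:ℤ) + 1) + (s:ℤ))^2 := by linarith [hB2]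
        rw [h4]
        exact dvd_sub (dvd_mul_right _ _) (dvd_pow h2 two_ne_zero)
      have h5 : (p:ℤ) ≤ (d3:ℤ) := Int.le_of_dvd (by exact_mod_cast hd3pos) hpd3
      have h6 : (d3:ℤ) ≤ 2 * (s:ℤ) := by exact_mod_cast hd3le
      have h7 : 2 * (s:ℤ) < (p:ℤ) := by exact_mod_cast h2s
      linarith
  · -- p ∣ q2
    have hq2pos : 0 < cfH p 3 := by rw [hq2n]; omega
    have h5 : (p:ℤ) ≤ (cfH p 3 : ℤ) := Int.le_of_dvd (by exact_mod_cast hq2pos) h1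
    have h6 : ((cfH p 3 : ℕ) : ℤ) ≤ 2 * (s:ℤ) := by exact_mod_cast hq2le
    have h7 : 2 * (s:ℤ) < (p:ℤ) := by exact_mod_cast h2s
    linarith
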